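/- For n ≥ 3, the fault diameter of Q_n is n+1: removing any set of at most n−1 vertices from Q_n leaves a connected graph of diameter at most n+1, and there is a set of exactly n−1 vertices whose removal yields a connected graph of diameter exactly n+1. -/

import Mathlib

open SimpleGraph

/-- The `n`-dimensional hypercube: vertices are `Fin n → Bool`,
adjacent iff Hamming distance is `1`. -/
def Q (n : ℕ) : SimpleGraph (Fin n → Bool) where
  Adj u v := hammingDist u v = 1
  symm := ⟨fun u v (h : hammingDist u v = 1) => by rwa [hammingDist_comm]⟩
  loopless := ⟨fun u (h : hammingDist u u = 1) => by simp [hammingDist_self] at h⟩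

/-- Flip the `i`-th bit of `x`. -/
def flipBit {n : ℕ} (x : Fin n → Bool) (i : Fin n) : Fin n → Bool :=
  Function.update x i (!x i)

/-- `S` is a subcube of dimension exactly `m` (fixing `n - m` coordinates). -/
def IsSubcube {n : ℕ} (m : ℕ) (S : Set (Fin n → Bool)) : Prop :=
  ∃ A : Finset (Fin n), A.card = n - m ∧ ∃ p : Fin n → Bool,
    S = {x | ∀ i ∈ A, x i = p i}

/-- `S` is a subcube of dimension at most `m` (fixing at least `n - m` coordinates). -/
def IsSubcubeLe {n : ℕ} (m : ℕ) (S : Set (Fin n → Bool)) : Prop :=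
  ∃ A : Finset (Fin n), n - m ≤ A.card ∧ ∃ p : Fin n → Bool,
    S = {x | ∀ i ∈ A, x i = p i}

/-!
Let `D` be the set of coordinates in which `x` and `y` differ, `d = |D|`. There are `n` paths
from `x` to `y` with no inner vertex in common: for `i ∈ D`, flip the coordinates of `D` in a fixed
cyclic order starting at `i` (length `d`); for `i ∉ D`, flip `i`, then all of `D`, then `i` again
(length `d + 2 ≤ n + 1`). A vertex is determined by the set of coordinates flipped to reach it;
proper cyclic arcs with different starting points are different sets, and a set containing
`i ∉ D` only occurs on the `i`-th path. So fewer than `n` faults miss one of these paths.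

Conversely, if all neighbours of `x` but `x + e_j` are deleted, every walk from `x` to the antipode
of `x + e_j` passes through `x + e_j` and so has length at least `1 + n`.
-/

open Finset

namespace SimpleGraph

variable {V : Type*} {G : SimpleGraph V} {s : Set V}

lemma exists_induce_walk_of_adj_seq (p : ℕ → V) {L : ℕ}
    (hadj : ∀ m < L, G.Adj (p m) (p (m + 1))) (hs : ∀ m ≤ L, p m ∈ s) {u v : s}
    (hu : p 0 = u) (hv : p L = v) : ∃ w : (G.induce s).Walk u v, w.length = L := by
  induction L generalizing v with
  | zero =>
    obtain rfl : u = v := Subtype.ext (hu.symm.trans hv)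
    exact ⟨Walk.nil, rfl⟩
  | succ L ih =>
    obtain ⟨w, hw⟩ := ih (fun m hm => hadj m (by omega)) (fun m hm => hs m (by omega))
      (v := ⟨p L, hs L (by omega)⟩) rfl
    refine ⟨w.concat (induce_adj.2 (hv ▸ hadj L (by omega))), ?_⟩
    rw [Walk.length_concat, hw]

end SimpleGraph

lemma exists_forall_notMem_of_internally_disjoint {V κ : Type*} [Finite V] [Fintype κ]
    (p : κ → ℕ → V) (L : κ → ℕ)
    (hp : ∀ k k' m m', 0 < m → m < L k → 0 < m' → m' < L k' → p k m = p k' m' → k = k')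
    {S : Set V} (hS : S.ncard < Fintype.card κ) :
    ∃ k, ∀ m, 0 < m → m < L k → p k m ∉ S := by
  by_contra! h
  choose f hf0 hfL hfS using h
  have hinj : Function.Injective fun k => (⟨p k (f k), hfS k⟩ : S) := fun k k' hkk' =>
    hp k k' _ _ (hf0 k) (hfL k) (hf0 k') (hfL k') (congrArg Subtype.val hkk')
  have := Nat.card_le_card_of_injective _ hinj
  rw [Nat.card_eq_fintype_card, Nat.card_coe_set_eq] at this
  omega

section CyclicArc

/-- The cyclic interval `a, a + 1, …, a + m - 1` of `Fin d` (taken mod `d`); the second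
disjunct is the part that wraps around. -/
def cyclicArc (d a m : ℕ) : Finset (Fin d) :=
  {j | a ≤ j ∧ j < a + m ∨ j + d < a + m}

variable {d a b m m' : ℕ}

lemma cyclicArc_zero (ha : a ≤ d) : cyclicArc d a 0 = ∅ := by
  ext j
  simp only [cyclicArc, mem_filter, mem_univ, true_and, notMem_empty, iff_false]
  omega

lemma cyclicArc_self_eq_univ : cyclicArc d a d = univ := by
  ext j
  simp only [cyclicArc, mem_filter, mem_univ, true_and, iff_true]
  omega

lemma mem_cyclicArc_self (ha : a < d) (hm : 0 < m) : ⟨a, ha⟩ ∈ cyclicArc d a m := by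
  simp only [cyclicArc, mem_filter, mem_univ, true_and]
  omega

lemma exists_cyclicArc_succ (ha : a < d) (hm : m < d) :
    ∃ j ∉ cyclicArc d a m, cyclicArc d a (m + 1) = insert j (cyclicArc d a m) := by
  refine ⟨⟨if a + m < d then a + m else a + m - d, by split_ifs <;> omega⟩, ?_, ?_⟩
  · simp only [cyclicArc, mem_filter, mem_univ, true_and]
    split_ifs <;> omega
  · ext j
    simp only [cyclicArc, mem_filter, mem_univ, true_and, mem_insert, Fin.ext_iff]
    split_ifs <;> omega

lemma eq_of_cyclicArc_eq (ha : a < d) (hb : b < d) (hm₀ : 0 < m') (hm : m' < d)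
    (h : cyclicArc d a m = cyclicArc d b m') : a = b := by
  have hb' : ⟨b, hb⟩ ∈ cyclicArc d a m := h ▸ mem_cyclicArc_self hb hm₀
  by_contra hab
  -- the cyclic predecessor of `b` lies in the arc from `a`, but not in the arc from `b`
  have hc : ⟨if b = 0 then d - 1 else b - 1, by split_ifs <;> omega⟩ ∈ cyclicArc d a m := by
    simp only [cyclicArc, mem_filter, mem_univ, true_and] at hb' ⊢
    split_ifs <;> omega
  rw [h] at hc
  simp only [cyclicArc, mem_filter, mem_univ, true_and] at hc
  split_ifs at hc <;> omega

end CyclicArc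

section FlipOn

variable {ι : Type*} [DecidableEq ι]

def flipOn (x : ι → Bool) (T : Finset ι) : ι → Bool :=
  fun j => if j ∈ T then !x j else x j

variable {x y : ι → Bool} {T : Finset ι} {j : ι}

@[simp] lemma flipOn_empty : flipOn x ∅ = x := by
  funext j
  simp [flipOn]

lemma flipOn_apply_ne_iff : flipOn x T j ≠ x j ↔ j ∈ T := by
  by_cases hj : j ∈ T <;> simp [flipOn, hj]

lemma flipOn_injective (x : ι → Bool) : Function.Injective (flipOn x) := fun T T' h => by
  ext j
  rw [← flipOn_apply_ne_iff (x := x), h, flipOn_apply_ne_iff]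

lemma flipOn_insert (hj : j ∉ T) : flipOn x (insert j T) = flipOn (flipOn x T) {j} := by
  funext k
  by_cases hk : k = j
  · subst hk
    simp [flipOn, hj]
  · simp [flipOn, hk]

variable [Fintype ι]

lemma filter_ne_flipOn : ({j | x j ≠ flipOn x T j} : Finset ι) = T := by
  ext j
  simp only [mem_filter, mem_univ, true_and, ne_comm (a := x j), flipOn_apply_ne_iff]

lemma hammingDist_flipOn : hammingDist x (flipOn x T) = #T :=
  congrArg card filter_ne_flipOn

lemma flipOn_filter_ne : flipOn x {j | x j ≠ y j} = y := by
  funext j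
  cases hx : x j <;> cases hy : y j <;> simp [flipOn, hx, hy]

end FlipOn

section Hypercube

variable {n : ℕ} {x y : Fin n → Bool}

lemma Q_adj_flipOn_singleton (x : Fin n → Bool) (j : Fin n) : (Q n).Adj x (flipOn x {j}) :=
  hammingDist_flipOn.trans (card_singleton j)

lemma Q_adj_flipOn_insert (x : Fin n → Bool) {T : Finset (Fin n)} {j : Fin n} (hj : j ∉ T) :
    (Q n).Adj (flipOn x T) (flipOn x (insert j T)) := by
  rw [flipOn_insert hj]
  exact Q_adj_flipOn_singleton _ j

lemma exists_eq_flipOn_singleton_of_Q_adj (h : (Q n).Adj x y) : ∃ j, y = flipOn x {j} := by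
  obtain ⟨j, hj⟩ := card_eq_one.1 (show hammingDist x y = 1 from h)
  exact ⟨j, by rw [← hj, flipOn_filter_ne]⟩

lemma hammingDist_le_length_of_Q_walk (w : (Q n).Walk x y) : hammingDist x y ≤ w.length := by
  induction w with
  | nil => simp
  | @cons u v w h p ih =>
    calc hammingDist u w ≤ hammingDist u v + hammingDist v w := hammingDist_triangle u v w
      _ ≤ p.length + 1 := by rw [show hammingDist u v = 1 from h]; omega
      _ = (Walk.cons h p).length := (Walk.length_cons h p).symm

end Hypercube

section PathSystem

variable {ι : Type*} {d : ℕ}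

abbrev PathIndex (e : Fin d ↪ ι) : Type _ := Fin d ⊕ {i // i ∉ univ.map e}

def pathLength (e : Fin d ↪ ι) : PathIndex e → ℕ
  | .inl _ => d
  | .inr _ => d + 2

lemma pathLength_le [Fintype ι] {e : Fin d ↪ ι} (k : PathIndex e) :
    pathLength e k ≤ Fintype.card ι + 1 := by
  cases k with
  | inl a =>
    have := Fintype.card_le_of_embedding e
    rw [Fintype.card_fin] at this
    simp only [pathLength]
    omega
  | inr i =>
    have := card_lt_univ_of_notMem i.2
    rw [card_map, card_univ, Fintype.card_fin] at this
    simp only [pathLength]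
    omega

variable [DecidableEq ι]

/-- The sets flipped after `m` steps along the paths from `x` to `flipOn x (univ.map e)`: from a
position `a`, flip `e a, e (a + 1), …` cyclically; for `i` outside the image of `e`, flip `i`, then
`e 0, …, e (d - 1)`, then `i` again. -/
def pathFlips (e : Fin d ↪ ι) : PathIndex e → ℕ → Finset ι
  | .inl a, m => (cyclicArc d a m).map e
  | .inr _, 0 => ∅
  | .inr i, m + 1 => if m ≤ d then insert i.1 ((cyclicArc d 0 m).map e) else univ.map e

variable {e : Fin d ↪ ι} {m m' : ℕ}

lemma pathFlips_zero (k : PathIndex e) : pathFlips e k 0 = ∅ := by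
  cases k with
  | inl a => simp [pathFlips, cyclicArc_zero a.2.le]
  | inr i => rfl

lemma pathFlips_pathLength (k : PathIndex e) :
    pathFlips e k (pathLength e k) = univ.map e := by
  cases k with
  | inl a => simp [pathFlips, pathLength, cyclicArc_self_eq_univ]
  | inr i => simp [pathFlips, pathLength]

lemma eq_of_pathFlips_eq {k k' : PathIndex e}
    (h₀ : 0 < m) (hm : m < pathLength e k) (h₀' : 0 < m') (hm' : m' < pathLength e k')
    (h : pathFlips e k m = pathFlips e k' m') : k = k' := by
  have inl_subset (a : Fin d) (m : ℕ) : pathFlips e (.inl a) m ⊆ univ.map e :=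
    map_subset_map.2 (subset_univ _)
  have inr_subset (i : {i // i ∉ univ.map e}) (m : ℕ) :
      pathFlips e (.inr i) m ⊆ insert i.1 (univ.map e) := by
    cases m with
    | zero => exact empty_subset _
    | succ m =>
      dsimp only [pathFlips]
      split_ifs
      · exact insert_subset_insert _ (map_subset_map.2 (subset_univ _))
      · exact subset_insert _ _
  have mem_inr (i : {i // i ∉ univ.map e}) {m : ℕ} (h₀ : 0 < m) (hm : m < d + 2) :
      i.1 ∈ pathFlips e (.inr i) m := by
    obtain ⟨m, rfl⟩ : ∃ m', m = m' + 1 := ⟨m - 1, by omega⟩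
    simp only [pathFlips, show m ≤ d by omega, if_true, mem_insert_self]
  rcases k with a | i <;> rcases k' with a' | i'
  · simp only [pathFlips, map_inj] at h
    exact congrArg _ (Fin.ext (eq_of_cyclicArc_eq a.2 a'.2 h₀' hm' h))
  · exact (i'.2 (inl_subset a m (h ▸ mem_inr i' h₀' hm'))).elim
  · exact (i.2 (inl_subset a' m' (h.symm ▸ mem_inr i h₀ hm))).elim
  · rcases mem_insert.1 (inr_subset i' m' (h ▸ mem_inr i h₀ hm)) with hii' | hi
    · exact congrArg _ (Subtype.ext hii')
    · exact (i.2 hi).elim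

lemma card_pathIndex [Fintype ι] (e : Fin d ↪ ι) :
    Fintype.card (PathIndex e) = Fintype.card ι := by
  have := Fintype.card_le_of_embedding e
  rw [Fintype.card_fin] at this
  rw [Fintype.card_sum, Fintype.card_fin, Fintype.card_subtype_compl, Fintype.card_coe,
    card_map, card_univ, Fintype.card_fin]
  omega

end PathSystem

lemma Q_adj_flipOn_pathFlips {n d : ℕ} {e : Fin d ↪ Fin n} (x : Fin n → Bool)
    (k : PathIndex e) {m : ℕ} (hm : m < pathLength e k) :
    (Q n).Adj (flipOn x (pathFlips e k m)) (flipOn x (pathFlips e k (m + 1))) := by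
  cases k with
  | inl a =>
    obtain ⟨j, hj, hsucc⟩ := exists_cyclicArc_succ a.2 hm
    simp only [pathFlips, hsucc, map_insert]
    exact Q_adj_flipOn_insert x (by simpa using hj)
  | inr i =>
    cases m with
    | zero =>
      simp only [pathFlips, zero_le, if_true, cyclicArc_zero d.zero_le, map_empty]
      exact Q_adj_flipOn_insert x (notMem_empty _)
    | succ m =>
      simp only [pathLength] at hm
      rcases Nat.lt_or_eq_of_le (show m ≤ d by omega) with hmd | rfl
      · obtain ⟨j, hj, hsucc⟩ := exists_cyclicArc_succ (by omega : 0 < d) hmd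
        have hj' : e j ∉ insert i.1 ((cyclicArc d 0 m).map e) := by
          simp only [mem_insert, mem_map', not_or]
          exact ⟨fun h => i.2 (h ▸ mem_map_of_mem e (mem_univ j)), hj⟩
        simp only [pathFlips, hmd.le, Nat.succ_le_of_lt hmd, if_true, hsucc, map_insert,
          insert_comm i.1 (e j)]
        exact Q_adj_flipOn_insert x hj'
      · simp only [pathFlips, le_refl, if_true, cyclicArc_self_eq_univ, Nat.not_succ_le_self,
          if_false]
        exact (Q_adj_flipOn_insert x i.2).symm

section FaultDiameter

variable {n : ℕ} {S : Set (Fin n → Bool)}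

lemma exists_walk_length_le_of_ncard_lt (hS : S.ncard < n) (x y : ↥Sᶜ) :
    ∃ w : ((Q n).induce Sᶜ).Walk x y, w.length ≤ n + 1 := by
  set D : Finset (Fin n) := {j | x.1 j ≠ y.1 j}
  set e := (D.orderEmbOfFin rfl).toEmbedding
  let p k m := flipOn x.1 (pathFlips e k m)
  obtain ⟨k, hk⟩ := exists_forall_notMem_of_internally_disjoint p (pathLength e)
    (fun _ _ _ _ h₀ hm h₀' hm' h => eq_of_pathFlips_eq h₀ hm h₀' hm' (flipOn_injective x.1 h))
    (by rwa [card_pathIndex, Fintype.card_fin])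
  have hp₀ : p k 0 = x := by simp [p, pathFlips_zero]
  have hpL : p k (pathLength e k) = y := by
    simp only [p, pathFlips_pathLength, e, D.map_orderEmbOfFin_univ, D, flipOn_filter_ne]
  have hpS (m : ℕ) (hm : m ≤ pathLength e k) : p k m ∈ Sᶜ := by
    rcases Nat.eq_zero_or_pos m with rfl | h₀
    · exact hp₀ ▸ x.2
    rcases hm.lt_or_eq with hm | rfl
    · exact hk m h₀ hm
    · exact hpL ▸ y.2
  obtain ⟨w, hw⟩ := exists_induce_walk_of_adj_seq (p k)
    (fun _ hm => Q_adj_flipOn_pathFlips x.1 k hm) hpS hp₀ hpL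
  exact ⟨w, hw ▸ (pathLength_le k).trans_eq (by rw [Fintype.card_fin])⟩

theorem connected_and_dist_le_of_ncard_lt (hS : S.ncard < n) :
    ((Q n).induce Sᶜ).Connected ∧ ∀ x y, ((Q n).induce Sᶜ).dist x y ≤ n + 1 := by
  have hne : Sᶜ.Nonempty := Set.nonempty_compl.2 fun h => by
    rw [h, Set.ncard_univ, Nat.card_eq_fintype_card, Fintype.card_fun, Fintype.card_bool,
      Fintype.card_fin] at hS
    exact (Nat.lt_two_pow_self).not_gt hS
  refine ⟨(connected_iff _).2 ⟨fun x y => ?_, hne.to_subtype⟩, fun x y => ?_⟩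
  · obtain ⟨w, -⟩ := exists_walk_length_le_of_ncard_lt hS x y
    exact ⟨w⟩
  · obtain ⟨w, hw⟩ := exists_walk_length_le_of_ncard_lt hS x y
    exact (dist_le w).trans hw

lemma hammingDist_add_one_le_length {x y : ↥Sᶜ} (j : Fin n) (hS : ∀ i ≠ j, flipOn x.1 {i} ∈ S)
    (hxy : x ≠ y) (w : ((Q n).induce Sᶜ).Walk x y) :
    hammingDist (flipOn x.1 {j}) y.1 + 1 ≤ w.length := by
  cases w with
  | nil => exact absurd rfl hxy
  | @cons _ v _ h p =>
    obtain ⟨i, hi⟩ := exists_eq_flipOn_singleton_of_Q_adj (induce_adj.1 h)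
    obtain rfl : i = j := by_contra fun hij => v.2 (hi ▸ hS i hij)
    rw [Walk.length_cons, ← hi]
    exact Nat.add_le_add_right ((hammingDist_le_length_of_Q_walk _).trans_eq
      (Walk.length_map (Embedding.induce Sᶜ).toHom p)) 1

theorem exists_ncard_eq_forall_succ_le_walk_length (hn : 3 ≤ n) :
    ∃ S : Set (Fin n → Bool), S.ncard = n - 1 ∧
      ∃ x y : ↥Sᶜ, ∀ w : ((Q n).induce Sᶜ).Walk x y, n + 1 ≤ w.length := by
  let x : Fin n → Bool := fun _ => false
  let j : Fin n := ⟨0, by omega⟩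
  let S : Finset (Fin n → Bool) := (univ.erase j).image fun i => flipOn x {i}
  -- the antipode of `flipOn x {j}`, the only neighbour of `x` that survives
  let y := flipOn (flipOn x {j}) univ
  have hSx : ∀ z ∈ S, hammingDist x z = 1 := by simp [S, hammingDist_flipOn]
  have hxy : n - 1 ≤ hammingDist x y := by
    have := hammingDist_triangle_left (flipOn x {j}) y x
    rw [hammingDist_flipOn, hammingDist_flipOn, card_singleton, card_univ, Fintype.card_fin] at this
    omega
  have hx : x ∉ S := fun h => by simpa using hSx x h
  have hy : y ∉ S := fun h => by have := hSx y h; omega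
  refine ⟨S, ?_, ⟨x, hx⟩, ⟨y, hy⟩, fun w => ?_⟩
  · have hinj : Function.Injective fun i : Fin n => flipOn x {i} :=
      (flipOn_injective x).comp singleton_injective
    rw [Set.ncard_coe_finset, card_image_of_injective _ hinj, card_erase_of_mem (mem_univ j),
      card_univ, Fintype.card_fin]
  · have hne : (⟨x, hx⟩ : ↥(↑S : Set _)ᶜ) ≠ ⟨y, hy⟩ := fun h => by
      rw [Subtype.mk.injEq] at h
      rw [← h, hammingDist_self] at hxy
      omega
    have := hammingDist_add_one_le_length j
      (fun i hi => mem_coe.2 (mem_image_of_mem _ (mem_erase.2 ⟨hi, mem_univ i⟩))) hne w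
    rwa [hammingDist_flipOn, card_univ, Fintype.card_fin] at this

end FaultDiameter

theorem fault_diameter_hypercube (n : ℕ) (hn : 3 ≤ n) :
    (∀ S : Set (Fin n → Bool), S.ncard ≤ n - 1 →
      ((Q n).induce Sᶜ).Connected ∧
      ∀ x y, ((Q n).induce Sᶜ).dist x y ≤ n + 1) ∧
    ∃ S : Set (Fin n → Bool), S.ncard = n - 1 ∧
      ((Q n).induce Sᶜ).Connected ∧
      (∀ x y, ((Q n).induce Sᶜ).dist x y ≤ n + 1) ∧
      ∃ x y, ((Q n).induce Sᶜ).dist x y = n + 1 := by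
  refine ⟨fun S hS => connected_and_dist_le_of_ncard_lt (by omega), ?_⟩
  obtain ⟨S, hcard, x, y, hlong⟩ := exists_ncard_eq_forall_succ_le_walk_length hn
  obtain ⟨hconn, hdist⟩ := connected_and_dist_le_of_ncard_lt (S := S) (by omega)
  obtain ⟨w, hw⟩ := (hconn.preconnected x y).exists_walk_length_eq_dist
  exact ⟨S, hcard, hconn, hdist, x, y, le_antisymm (hdist x y) (hw ▸ hlong w)⟩
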